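/- Two m×n matrices M and N over a field k lie in the same B_-(m) × B_+(n) orbit (acting by M ↦ b^{-1} M c with b lower triangular invertible, c upper triangular invertible) if and only if for every i ≤ m and j ≤ n, the rank of the northwest i×j submatrix of M equals the rank of the northwest i×j submatrix of N. -/

import Mathlib

/-! For `b` lower and `c` upper triangular, the northwest `i × j` corner of `b⁻¹ * M * c` is the
product of the corresponding corners of `b⁻¹`, `M` and `c`, and those of `b⁻¹` and `c` are
invertible; so the ranks of the northwest submatrices are orbit invariants.

Conversely, eliminating column by column (adding multiples of earlier columns to later ones and
of higher rows to lower ones) moves every matrix into the orbit of a partial permutation matrix.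
A partial permutation matrix `P` is determined by its northwest ranks: the rank of the
`i × j` corner counts the columns `q < j` having their nonzero entry in a row `< i`, so
`P a q ≠ 0` exactly when passing from `j = q` to `j = q + 1` raises the rank for `i = a + 1`
but not for `i = a`. -/

/-- `M` and `N` are in the same orbit of `B_-(m) × B_+(n)` acting by `M ↦ b⁻¹ M c` with
`b` invertible lower triangular and `c` invertible upper triangular. -/
def SameBorbit {k : Type} [Field k] {m n : ℕ} (M N : Matrix (Fin m) (Fin n) k) : Prop :=
  ∃ (b : Matrix (Fin m) (Fin m) k) (c : Matrix (Fin n) (Fin n) k),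
    IsUnit b.det ∧ IsUnit c.det ∧
    (∀ i j, i < j → b i j = 0) ∧ (∀ i j, j < i → c i j = 0) ∧
    N = b⁻¹ * M * c

open Matrix

open Classical in
theorem Fin.natCard_subtype_castLE_succ {n : ℕ} (p : Fin n → Prop) (q : Fin n) :
    Nat.card {x : Fin (q + 1) // p (Fin.castLE q.isLt x)} =
      Nat.card {x : Fin q // p (Fin.castLE q.is_le' x)} + if p q then 1 else 0 := by
  simp only [Nat.card_eq_fintype_card, Fintype.card_subtype, Finset.card_filter,
    Fin.sum_univ_castSucc, Fin.castLE_castSucc]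
  rfl

namespace Matrix

variable {R : Type*} [CommRing R]

theorem submatrix_mul_of_forall_notMem_range {l m n l' m' n' : Type*} [Fintype m] [Fintype m']
    (A : Matrix l m R) (B : Matrix m n R) (f : l' → l) {e : m' → m}
    (he : Function.Injective e) (g : n' → n)
    (h : ∀ p q r, r ∉ Set.range e → A (f p) r * B r (g q) = 0) :
    (A * B).submatrix f g = A.submatrix f e * B.submatrix e g := by
  ext p q
  exact (Fintype.sum_of_injective e he _ _ (h p q) fun _ => rfl).symm

section UpdateCol

variable {n : Type*} [DecidableEq n]

theorem isUpperTriangular_one_updateCol [Preorder n] {j : n} {w : n → R}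
    (hw : ∀ r, j < r → w r = 0) : ((1 : Matrix n n R).updateCol j w).IsUpperTriangular := by
  intro r q hqr
  rw [updateCol_apply]
  split_ifs with hq
  · exact hw r (hq ▸ hqr)
  · exact one_apply_ne (ne_of_gt hqr)

theorem isLowerTriangular_one_updateCol [Preorder n] {j : n} {w : n → R}
    (hw : ∀ r, r < j → w r = 0) : ((1 : Matrix n n R).updateCol j w).IsLowerTriangular := by
  intro r q hqr
  rw [updateCol_apply]
  split_ifs with hq
  · exact hw r (hq ▸ hqr)
  · exact one_apply_ne (ne_of_lt hqr)

variable [Fintype n]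

theorem det_one_updateCol (j : n) (w : n → R) :
    ((1 : Matrix n n R).updateCol j w).det = w j := by
  simpa [one_apply] using det_updateCol_sum (1 : Matrix n n R) j w

theorem one_updateCol_mulVec_of_eq_zero {j : n} (w : n → R) {v : n → R} (hv : v j = 0) :
    (1 : Matrix n n R).updateCol j w *ᵥ v = v := by
  ext a
  simp only [mulVec, dotProduct, updateCol_apply, one_apply, ite_mul, one_mul, zero_mul]
  have hterm : ∀ x, (if x = j then w a * v x else if a = x then v x else 0) =
      if a = x then v x else 0 := fun x => by split_ifs <;> simp_all
  simp [hterm]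

theorem one_updateCol_mulVec_single (j : n) (w : n → R) :
    (1 : Matrix n n R).updateCol j w *ᵥ Pi.single j 1 = w := by
  ext a
  simp

end UpdateCol

section Northwest

variable {m n : ℕ}

theorem IsLowerTriangular.mul_submatrix_castLE {b : Matrix (Fin m) (Fin m) R}
    (hb : b.IsLowerTriangular) (M : Matrix (Fin m) (Fin n) R) {i j : ℕ} (hi : i ≤ m)
    (hj : j ≤ n) :
    (b * M).submatrix (Fin.castLE hi) (Fin.castLE hj) =
      b.submatrix (Fin.castLE hi) (Fin.castLE hi) *
        M.submatrix (Fin.castLE hi) (Fin.castLE hj) := by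
  refine submatrix_mul_of_forall_notMem_range _ _ _ (Fin.castLE_injective hi) _
    fun p q r hr => ?_
  rw [Fin.range_castLE] at hr
  exact mul_eq_zero_of_left (hb (Fin.lt_def.mpr (lt_of_lt_of_le p.isLt (not_lt.mp hr)))) _

theorem IsUpperTriangular.submatrix_castLE_mul {c : Matrix (Fin n) (Fin n) R}
    (hc : c.IsUpperTriangular) (M : Matrix (Fin m) (Fin n) R) {i j : ℕ} (hi : i ≤ m)
    (hj : j ≤ n) :
    (M * c).submatrix (Fin.castLE hi) (Fin.castLE hj) =
      M.submatrix (Fin.castLE hi) (Fin.castLE hj) *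
        c.submatrix (Fin.castLE hj) (Fin.castLE hj) := by
  refine submatrix_mul_of_forall_notMem_range _ _ _ (Fin.castLE_injective hj) _
    fun p q r hr => ?_
  rw [Fin.range_castLE] at hr
  exact mul_eq_zero_of_right _ (hc (Fin.lt_def.mpr (lt_of_lt_of_le q.isLt (not_lt.mp hr))))

theorem IsLowerTriangular.isUnit_det_submatrix_castLE {b : Matrix (Fin m) (Fin m) R}
    (hb : b.IsLowerTriangular) (hdet : IsUnit b.det) {i : ℕ} (hi : i ≤ m) :
    IsUnit (b.submatrix (Fin.castLE hi) (Fin.castLE hi)).det := by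
  refine isUnit_det_of_right_inverse (B := b⁻¹.submatrix (Fin.castLE hi) (Fin.castLE hi)) ?_
  rw [← hb.mul_submatrix_castLE, mul_nonsing_inv b hdet,
    submatrix_one _ (Fin.castLE_injective hi)]

theorem IsUpperTriangular.isUnit_det_submatrix_castLE {c : Matrix (Fin n) (Fin n) R}
    (hc : c.IsUpperTriangular) (hdet : IsUnit c.det) {j : ℕ} (hj : j ≤ n) :
    IsUnit (c.submatrix (Fin.castLE hj) (Fin.castLE hj)).det := by
  refine isUnit_det_of_left_inverse (B := c⁻¹.submatrix (Fin.castLE hj) (Fin.castLE hj)) ?_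
  rw [← hc.submatrix_castLE_mul, nonsing_inv_mul c hdet,
    submatrix_one _ (Fin.castLE_injective hj)]

end Northwest

end Matrix

section Orbit

variable {k : Type} [Field k] {m n : ℕ}

theorem sameBorbit_iff {M N : Matrix (Fin m) (Fin n) k} :
    SameBorbit M N ↔ ∃ (b : Matrix (Fin m) (Fin m) k) (c : Matrix (Fin n) (Fin n) k),
      IsUnit b.det ∧ IsUnit c.det ∧ b.IsLowerTriangular ∧ c.IsUpperTriangular ∧
        N = b⁻¹ * M * c :=
  Iff.rfl

namespace SameBorbit

theorem refl (M : Matrix (Fin m) (Fin n) k) : SameBorbit M M :=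
  sameBorbit_iff.mpr ⟨1, 1, by simp, by simp, blockTriangular_one, blockTriangular_one, by simp⟩

theorem symm {M N : Matrix (Fin m) (Fin n) k} (h : SameBorbit M N) : SameBorbit N M := by
  obtain ⟨b, c, hb, hc, hbl, hcu, rfl⟩ := sameBorbit_iff.mp h
  have : Invertible b := b.invertibleOfIsUnitDet hb
  have : Invertible c := c.invertibleOfIsUnitDet hc
  refine sameBorbit_iff.mpr ⟨b⁻¹, c⁻¹, b.isUnit_nonsing_inv_det hb, c.isUnit_nonsing_inv_det hc,
    blockTriangular_inv_of_blockTriangular hbl, blockTriangular_inv_of_blockTriangular hcu, ?_⟩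
  simp [Matrix.mul_assoc]

theorem trans {M N P : Matrix (Fin m) (Fin n) k} (h₁ : SameBorbit M N) (h₂ : SameBorbit N P) :
    SameBorbit M P := by
  obtain ⟨b₁, c₁, hb₁, hc₁, hbl₁, hcu₁, rfl⟩ := sameBorbit_iff.mp h₁
  obtain ⟨b₂, c₂, hb₂, hc₂, hbl₂, hcu₂, rfl⟩ := sameBorbit_iff.mp h₂
  refine sameBorbit_iff.mpr ⟨b₁ * b₂, c₁ * c₂, by simpa using hb₁.mul hb₂,
    by simpa using hc₁.mul hc₂, hbl₁.mul hbl₂, hcu₁.mul hcu₂, ?_⟩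
  simp [Matrix.mul_inv_rev, Matrix.mul_assoc]

theorem inv_mul {b : Matrix (Fin m) (Fin m) k} (hb : b.IsLowerTriangular) (hdet : IsUnit b.det)
    (M : Matrix (Fin m) (Fin n) k) : SameBorbit M (b⁻¹ * M) :=
  sameBorbit_iff.mpr ⟨b, 1, hdet, by simp, hb, blockTriangular_one, by simp⟩

theorem mul {c : Matrix (Fin n) (Fin n) k} (hc : c.IsUpperTriangular) (hdet : IsUnit c.det)
    (M : Matrix (Fin m) (Fin n) k) : SameBorbit M (M * c) :=
  sameBorbit_iff.mpr ⟨1, c, by simp, hdet, blockTriangular_one, hc, by simp⟩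

theorem rank_submatrix_castLE_eq {M N : Matrix (Fin m) (Fin n) k} (h : SameBorbit M N)
    {i j : ℕ} (hi : i ≤ m) (hj : j ≤ n) :
    (N.submatrix (Fin.castLE hi) (Fin.castLE hj)).rank =
      (M.submatrix (Fin.castLE hi) (Fin.castLE hj)).rank := by
  obtain ⟨b, c, hb, hc, hbl, hcu, rfl⟩ := sameBorbit_iff.mp h
  have : Invertible b := b.invertibleOfIsUnitDet hb
  have hbl' : b⁻¹.IsLowerTriangular := blockTriangular_inv_of_blockTriangular hbl
  rw [hcu.submatrix_castLE_mul, hbl'.mul_submatrix_castLE,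
    rank_mul_eq_left_of_isUnit_det _ _ (hcu.isUnit_det_submatrix_castLE hc hj),
    rank_mul_eq_right_of_isUnit_det _ _
      (hbl'.isUnit_det_submatrix_castLE (b.isUnit_nonsing_inv_det hb) hi)]

end SameBorbit

end Orbit

namespace Matrix

/-- For `s = univ` this says that `P` is a partial permutation matrix; during elimination `s` is
the set of columns already reduced. -/
structure IsPartialPermOn {R ι κ : Type*} [Zero R] [One R] (s : Finset κ) (P : Matrix ι κ R) :
    Prop where
  zero_or_one : ∀ a, ∀ q ∈ s, P a q = 0 ∨ P a q = 1
  row_unique : ∀ a, ∀ q ∈ s, ∀ q' ∈ s, P a q ≠ 0 → P a q' ≠ 0 → q = q'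
  col_unique : ∀ a a', ∀ q ∈ s, P a q ≠ 0 → P a' q ≠ 0 → a = a'

namespace IsPartialPermOn

section Basic

variable {R ι κ : Type*} [Zero R] [One R] {P : Matrix ι κ R} {s : Finset κ}

theorem eq_one_of_ne_zero (hP : P.IsPartialPermOn s) {a : ι} {q : κ} (hq : q ∈ s)
    (h : P a q ≠ 0) : P a q = 1 :=
  (hP.zero_or_one a q hq).resolve_left h

theorem congr {Q : Matrix ι κ R} (hP : P.IsPartialPermOn s) (h : ∀ a, ∀ q ∈ s, Q a q = P a q) :
    Q.IsPartialPermOn s where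
  zero_or_one a q hq := h a q hq ▸ hP.zero_or_one a q hq
  row_unique a q hq q' hq' := by
    rw [h a q hq, h a q' hq']
    exact hP.row_unique a q hq q' hq'
  col_unique a a' q hq := by
    rw [h a q hq, h a' q hq]
    exact hP.col_unique a a' q hq

theorem insert [DecidableEq κ] (hP : P.IsPartialPermOn s) {q₀ : κ}
    (h01 : ∀ a, P a q₀ = 0 ∨ P a q₀ = 1) (hcol : ∀ a a', P a q₀ ≠ 0 → P a' q₀ ≠ 0 → a = a')
    (hrow : ∀ a, P a q₀ ≠ 0 → ∀ q ∈ s, P a q = 0) : P.IsPartialPermOn (insert q₀ s) where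
  zero_or_one a q hq := by
    rcases Finset.mem_insert.mp hq with rfl | hqs
    exacts [h01 a, hP.zero_or_one a q hqs]
  row_unique a q hq q' hq' h h' := by
    rcases Finset.mem_insert.mp hq with rfl | hqs <;>
      rcases Finset.mem_insert.mp hq' with rfl | hqs'
    · rfl
    · exact absurd (hrow a h q' hqs') h'
    · exact absurd (hrow a h' q hqs) h
    · exact hP.row_unique a q hqs q' hqs' h h'
  col_unique a a' q hq := by
    rcases Finset.mem_insert.mp hq with rfl | hqs
    exacts [hcol a a', hP.col_unique a a' q hqs]

theorem submatrix [Fintype κ] {ι' κ' : Type*} [Fintype κ'] (hP : P.IsPartialPermOn Finset.univ)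
    {f : ι' → ι} {g : κ' → κ} (hf : Function.Injective f) (hg : Function.Injective g) :
    (P.submatrix f g).IsPartialPermOn Finset.univ where
  zero_or_one _ _ _ := hP.zero_or_one _ _ (Finset.mem_univ _)
  row_unique _ _ _ _ _ h h' :=
    hg (hP.row_unique _ _ (Finset.mem_univ _) _ (Finset.mem_univ _) h h')
  col_unique _ _ _ _ h h' := hf (hP.col_unique _ _ _ (Finset.mem_univ _) h h')

theorem ne_zero_iff_exists_lt_succ [Fintype κ] {m : ℕ} {P : Matrix (Fin m) κ R}
    (hP : P.IsPartialPermOn Finset.univ) (a : Fin m) (q : κ) :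
    P a q ≠ 0 ↔
      (∃ a' : Fin m, (a' : ℕ) < a + 1 ∧ P a' q ≠ 0) ∧ ¬∃ a' : Fin m, (a' : ℕ) < a ∧ P a' q ≠ 0 := by
  constructor
  · intro h
    refine ⟨⟨a, Nat.lt_succ_self _, h⟩, fun ⟨a', ha', h'⟩ => ?_⟩
    exact ha'.ne (congrArg Fin.val (hP.col_unique a' a q (Finset.mem_univ _) h' h))
  · rintro ⟨⟨a', ha', h'⟩, hnot⟩
    obtain rfl : a' = a := Fin.ext (by by_contra hne; exact hnot ⟨a', by omega, h'⟩)
    exact h'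

end Basic

section Rank

variable {k ι κ : Type*} [Field k] [Fintype ι] [Fintype κ] [DecidableEq κ] {P : Matrix ι κ k}

open Classical in
theorem transpose_mul_self (hP : P.IsPartialPermOn Finset.univ) :
    Pᵀ * P = diagonal fun q => if ∃ a, P a q ≠ 0 then 1 else 0 := by
  ext q q'
  rw [mul_apply, diagonal_apply]
  by_cases hq : ∃ a, P a q ≠ 0
  · obtain ⟨a, ha⟩ := hq
    rw [Finset.sum_eq_single a, transpose_apply, hP.eq_one_of_ne_zero (Finset.mem_univ _) ha,
      one_mul]
    · by_cases hqq' : q = q'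
      · subst hqq'
        simp [hP.eq_one_of_ne_zero (Finset.mem_univ _) ha, show ∃ a, P a q ≠ 0 from ⟨a, ha⟩]
      · rw [if_neg hqq']
        by_contra h
        exact hqq' (hP.row_unique a q (Finset.mem_univ _) q' (Finset.mem_univ _) ha h)
    · intro a' _ ha'
      rw [transpose_apply]
      by_contra h
      exact ha' (hP.col_unique a' a q (Finset.mem_univ _) (left_ne_zero_of_mul h) ha)
    · simp
  · push Not at hq
    simp [hq]

theorem rank_eq (hP : P.IsPartialPermOn Finset.univ) :
    P.rank = Nat.card {q // ∃ a, P a q ≠ 0} := by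
  classical
  set d : κ → k := fun q => if ∃ a, P a q ≠ 0 then 1 else 0
  have hPd : P * diagonal d = P := by
    ext a q
    rw [mul_diagonal]
    by_cases h : P a q = 0
    · rw [h, zero_mul]
    · simp [d, show ∃ a, P a q ≠ 0 from ⟨a, h⟩]
  -- `P` is a partial isometry, so `P` and the projection `Pᵀ * P` bound each other's rank
  have hrank : P.rank = (diagonal d).rank :=
    le_antisymm (hPd ▸ rank_mul_le_right _ _) (hP.transpose_mul_self ▸ rank_mul_le_right _ _)
  rw [hrank, rank_diagonal, ← Nat.card_eq_fintype_card]
  exact Nat.card_congr (Equiv.subtypeEquivRight fun q => by simp [d])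

end Rank

section Northwest

variable {k : Type} [Field k] {m n : ℕ} {P : Matrix (Fin m) (Fin n) k}

theorem rank_submatrix_castLE_succ_ne_iff (hP : P.IsPartialPermOn Finset.univ) {i : ℕ}
    (hi : i ≤ m) (q : Fin n) :
    (P.submatrix (Fin.castLE hi) (Fin.castLE q.isLt)).rank ≠
        (P.submatrix (Fin.castLE hi) (Fin.castLE q.is_le')).rank ↔
      ∃ a : Fin m, (a : ℕ) < i ∧ P a q ≠ 0 := by
  have hinj := Fin.castLE_injective hi
  rw [(hP.submatrix hinj (Fin.castLE_injective _)).rank_eq,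
    (hP.submatrix hinj (Fin.castLE_injective _)).rank_eq]
  simp only [submatrix_apply]
  rw [Fin.natCard_subtype_castLE_succ (fun q => ∃ a : Fin i, P (Fin.castLE hi a) q ≠ 0) q]
  have hlast : (∃ a : Fin i, P (Fin.castLE hi a) q ≠ 0) ↔ ∃ a : Fin m, (a : ℕ) < i ∧ P a q ≠ 0 :=
    ⟨fun ⟨a, ha⟩ => ⟨_, a.isLt, ha⟩, fun ⟨a, hai, ha⟩ => ⟨⟨a, hai⟩, ha⟩⟩
  split_ifs with h <;> simpa [← hlast] using h

theorem ne_zero_iff_rank (hP : P.IsPartialPermOn Finset.univ) (a : Fin m) (q : Fin n) :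
    P a q ≠ 0 ↔
      (P.submatrix (Fin.castLE a.isLt) (Fin.castLE q.isLt)).rank ≠
          (P.submatrix (Fin.castLE a.isLt) (Fin.castLE q.is_le')).rank ∧
        (P.submatrix (Fin.castLE a.is_le') (Fin.castLE q.isLt)).rank =
          (P.submatrix (Fin.castLE a.is_le') (Fin.castLE q.is_le')).rank := by
  rw [hP.ne_zero_iff_exists_lt_succ, ← hP.rank_submatrix_castLE_succ_ne_iff, ← not_ne_iff,
    ← hP.rank_submatrix_castLE_succ_ne_iff]

theorem eq_of_rank_submatrix_castLE_eq {Q : Matrix (Fin m) (Fin n) k}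
    (hP : P.IsPartialPermOn Finset.univ) (hQ : Q.IsPartialPermOn Finset.univ)
    (h : ∀ (i j : ℕ) (hi : i ≤ m) (hj : j ≤ n),
      (P.submatrix (Fin.castLE hi) (Fin.castLE hj)).rank =
        (Q.submatrix (Fin.castLE hi) (Fin.castLE hj)).rank) :
    P = Q := by
  ext a q
  have hsupp : P a q ≠ 0 ↔ Q a q ≠ 0 := by
    rw [hP.ne_zero_iff_rank, hQ.ne_zero_iff_rank, h, h, h, h]
  rcases hP.zero_or_one a q (Finset.mem_univ _) with hp | hp <;>
    rcases hQ.zero_or_one a q (Finset.mem_univ _) with hq | hq <;> simp_all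

end Northwest

end IsPartialPermOn

end Matrix

section Elimination

variable {k : Type} [Field k] {m n : ℕ}

theorem exists_sameBorbit_updateCol_eq_zero_of_ne_zero {N : Matrix (Fin m) (Fin n) k}
    {s : Finset (Fin n)} {q₀ : Fin n} (hs : ∀ q ∈ s, q < q₀) (hN : N.IsPartialPermOn s) :
    ∃ u : Fin m → k, SameBorbit N (N.updateCol q₀ u) ∧ ∀ a, ∀ q ∈ s, N a q ≠ 0 → u a = 0 := by
  -- subtract from column `q₀` each column `q ∈ s` times the entry of `q₀` in the pivot row of `q`
  set w : Fin n → k := Pi.single q₀ 1 - ∑ q ∈ s, (∑ b, N b q * N b q₀) • Pi.single q 1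
  have hw : ∀ r, q₀ < r → w r = 0 := fun r hr => by
    simpa [w, Pi.single_apply, hr.ne'] using fun h => absurd (hs r h) (lt_asymm hr)
  have hwq₀ : w q₀ = 1 := by
    simpa [w, Pi.single_apply] using fun h => absurd (hs q₀ h) (lt_irrefl _)
  refine ⟨N *ᵥ w, ?_, fun a q₁ hq₁ ha => ?_⟩
  · simpa [mul_updateCol] using SameBorbit.mul (isUpperTriangular_one_updateCol hw)
      (by rw [det_one_updateCol, hwq₀]; exact isUnit_one) N
  · have hcoef : ∑ b, N b q₁ * N b q₀ = N a q₀ := by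
      rw [Finset.sum_eq_single a, hN.eq_one_of_ne_zero hq₁ ha, one_mul]
      · intro b _ hb
        by_contra h
        exact hb (hN.col_unique b a q₁ hq₁ (left_ne_zero_of_mul h) ha)
      · simp
    have hsum : ∑ q ∈ s, (∑ b, N b q * N b q₀) * N a q = N a q₀ := by
      rw [Finset.sum_eq_single_of_mem q₁ hq₁, hcoef, hN.eq_one_of_ne_zero hq₁ ha, mul_one]
      intro q hq hne
      by_contra h
      exact hne (hN.row_unique a q hq q₁ hq₁ (right_ne_zero_of_mul h) ha)
    simp [w, mulVec_sub, mulVec_sum, mulVec_smul, hsum]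

theorem exists_sameBorbit_isPartialPermOn_insert_of_eq_zero {N : Matrix (Fin m) (Fin n) k}
    {s : Finset (Fin n)} {q₀ : Fin n} (hN : N.IsPartialPermOn s)
    (hpiv : ∀ a, ∀ q ∈ s, N a q ≠ 0 → N a q₀ = 0) :
    ∃ N', SameBorbit N N' ∧ N'.IsPartialPermOn (insert q₀ s) := by
  by_cases hz : ∀ a, N a q₀ = 0
  · exact ⟨N, SameBorbit.refl N, hN.insert (fun a => .inl (hz a))
      (fun a _ h => absurd (hz a) h) (fun a h => absurd (hz a) h)⟩
  push Not at hz
  obtain ⟨i₀, hi₀, hmin⟩ := wellFounded_lt.has_min {a | N a q₀ ≠ 0} hz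
  have hrow : ∀ q ∈ s, N i₀ q = 0 := fun q hq => by
    by_contra h
    exact hi₀ (hpiv i₀ q hq h)
  -- `b` maps `Pi.single i₀ 1` to column `q₀` of `N` and fixes the columns in `s`
  set b := (1 : Matrix (Fin m) (Fin m) k).updateCol i₀ (N.col q₀)
  have hbl : b.IsLowerTriangular := isLowerTriangular_one_updateCol fun a ha => by
    by_contra h
    exact hmin a h ha
  have hdet : IsUnit b.det := by
    rw [det_one_updateCol]
    exact isUnit_iff_ne_zero.mpr hi₀
  have : Invertible b := b.invertibleOfIsUnitDet hdet
  have hcol : ∀ q, N i₀ q = 0 → (b⁻¹ * N).col q = N.col q := fun q hq =>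
    inv_mulVec_eq_vec (one_updateCol_mulVec_of_eq_zero (v := N.col q) _ hq).symm
  have hcol₀ : (b⁻¹ * N).col q₀ = Pi.single i₀ 1 :=
    inv_mulVec_eq_vec (one_updateCol_mulVec_single _ _).symm
  have hpivot : ∀ a, (b⁻¹ * N) a q₀ ≠ 0 → a = i₀ := fun a ha => by
    by_contra h
    exact ha (by simpa [h] using congrFun hcol₀ a)
  refine ⟨b⁻¹ * N, SameBorbit.inv_mul hbl hdet N,
    (hN.congr fun a q hq => congrFun (hcol q (hrow q hq)) a).insert (fun a => ?_)
      (fun a a' ha ha' => (hpivot a ha).trans (hpivot a' ha').symm) fun a ha q hq => ?_⟩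
  · rw [hcol₀, Pi.single_apply]
    split_ifs <;> simp
  · rw [hpivot a ha]
    exact (congrFun (hcol q (hrow q hq)) i₀).trans (hrow q hq)

theorem exists_sameBorbit_isPartialPermOn_insert {N : Matrix (Fin m) (Fin n) k}
    {s : Finset (Fin n)} {q₀ : Fin n} (hs : ∀ q ∈ s, q < q₀) (hN : N.IsPartialPermOn s) :
    ∃ N', SameBorbit N N' ∧ N'.IsPartialPermOn (insert q₀ s) := by
  obtain ⟨u, hNu, hu⟩ := exists_sameBorbit_updateCol_eq_zero_of_ne_zero hs hN
  have hsame : ∀ a, ∀ q ∈ s, N.updateCol q₀ u a q = N a q := fun a q hq =>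
    updateCol_ne (hs q hq).ne
  obtain ⟨N', hN', hP⟩ := exists_sameBorbit_isPartialPermOn_insert_of_eq_zero (q₀ := q₀)
    (hN.congr hsame) fun a q hq ha => by simpa using hu a q hq (hsame a q hq ▸ ha)
  exact ⟨N', hNu.trans hN', hP⟩

theorem exists_sameBorbit_isPartialPermOn_filter_lt (M : Matrix (Fin m) (Fin n) k) (j : ℕ) :
    ∃ N, SameBorbit M N ∧ N.IsPartialPermOn (Finset.univ.filter fun q : Fin n => (q : ℕ) < j) := by
  induction j with
  | zero => exact ⟨M, SameBorbit.refl M, by simpa using ⟨by simp, by simp, by simp⟩⟩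
  | succ j ih =>
    obtain ⟨N, hMN, hN⟩ := ih
    by_cases hj : j < n
    · have hinsert : (Finset.univ.filter fun q : Fin n => (q : ℕ) < j + 1) =
          insert ⟨j, hj⟩ (Finset.univ.filter fun q : Fin n => (q : ℕ) < j) := by
        ext q
        simp only [Finset.mem_filter, Finset.mem_univ, true_and, Finset.mem_insert, Fin.ext_iff]
        omega
      obtain ⟨N', hNN', hN'⟩ := exists_sameBorbit_isPartialPermOn_insert (q₀ := ⟨j, hj⟩)
        (fun q hq => Fin.lt_def.mpr (Finset.mem_filter.mp hq).2) hN
      exact ⟨N', hMN.trans hNN', hinsert ▸ hN'⟩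
    · have hfilter : (Finset.univ.filter fun q : Fin n => (q : ℕ) < j + 1) =
          Finset.univ.filter fun q : Fin n => (q : ℕ) < j := by
        ext q
        simp only [Finset.mem_filter, Finset.mem_univ, true_and]
        omega
      exact ⟨N, hMN, hfilter ▸ hN⟩

theorem exists_sameBorbit_isPartialPerm (M : Matrix (Fin m) (Fin n) k) :
    ∃ N, SameBorbit M N ∧ N.IsPartialPermOn Finset.univ := by
  simpa using exists_sameBorbit_isPartialPermOn_filter_lt M n

end Elimination

/-- two `m × n` matrices over a field lie in the same `B_-(m) × B_+(n)`
orbit iff all their northwest `i × j` submatrices have equal rank. -/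
theorem stmt_6 (k : Type) [Field k] (m n : ℕ) (M N : Matrix (Fin m) (Fin n) k) :
    SameBorbit M N ↔
      ∀ (i j : ℕ) (hi : i ≤ m) (hj : j ≤ n),
        (M.submatrix (Fin.castLE hi) (Fin.castLE hj)).rank =
          (N.submatrix (Fin.castLE hi) (Fin.castLE hj)).rank := by
  refine ⟨fun h i j hi hj => (h.rank_submatrix_castLE_eq hi hj).symm, fun h => ?_⟩
  obtain ⟨P, hMP, hP⟩ := exists_sameBorbit_isPartialPerm M
  obtain ⟨Q, hNQ, hQ⟩ := exists_sameBorbit_isPartialPerm N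
  have hPQ : P = Q := hP.eq_of_rank_submatrix_castLE_eq hQ fun i j hi hj => by
    rw [hMP.rank_submatrix_castLE_eq, hNQ.rank_submatrix_castLE_eq, h]
  exact hMP.trans (hPQ ▸ hNQ.symm)
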